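/- arXiv:2101.05732 — 4 statements merged into one kernel-verified Lean document; each statement's English description precedes it below -/
import Mathlib

section
/- (Colouring algorithm) Let Q be a countable quasi-order, let n ≥ 1, and let Φ ⊆ Qⁿ be an n-ary relation on Q. Then Q is thin if and only if both of the following S-invariant sets carry Borel 3-colourable subgraphs: A_Φ = {X ∈ Q⃗ : ∀ k, Φ(X(k),…,X(k+n−1))} and A_{¬Φ} = {X ∈ Q⃗ : ∀ k, ¬Φ(X(k),…,X(k+n−1))}; that is, Q is thin iff for each of these two sets A there is a Borel map c : A → {0,1,2} with c(X) ≠ c(S(X)) for all X ∈ A. -/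
/-- The shift map on sequences. -/
def seqShift {Q : Type*} (X : ℕ → Q) : ℕ → Q := fun k => X (k + 1)

/-- The set `Q⃗` of sequences `X` with `¬ r (X k) (X (k+1))` for all `k`. -/
def vecSet {Q : Type*} (r : Q → Q → Prop) : Set (ℕ → Q) :=
  {X | ∀ k, ¬ r (X k) (X (k + 1))}

/-- The shift graph on a subset `A` of `Qᴺ` (with `Q` discrete, `Qᴺ` carrying the product
Borel structure) admits a Borel proper 3-colouring. -/
def Colour3 {Q : Type*} (A : Set (ℕ → Q)) : Prop :=
  letI : MeasurableSpace Q := ⊤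
  ∃ c : A → Fin 3, Measurable c ∧
    ∀ (X : ℕ → Q) (hX : X ∈ A) (hX' : seqShift X ∈ A),
      c ⟨X, hX⟩ ≠ c ⟨seqShift X, hX'⟩

/-- A relation `r` on `Q` is *thin* if the shift graph on `Q⃗ = vecSet r`
is Borel 3-colourable; otherwise it is *thick*. -/
def IsThin {Q : Type*} (r : Q → Q → Prop) : Prop := Colour3 (vecSet r)

/-!
Follow the orbit of `X` under the shift relative to the Borel set `P` of sequences whose first
window satisfies `Φ`. Either the orbit eventually stays in `P`, or it eventually stays out of `P`,
or it crosses the boundary of `P` infinitely often. Each of these pieces is shift-invariant and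
Borel, so colourings of them glue. On the first two pieces, colour `X` by the given colouring at
the first time its orbit enters the homogeneous part, offset by that time mod 3. On the third,
colour by the parity of the first crossing time, and at even times by which side of `P` we are on.
-/

def BorelThreeColourable {α : Type*} [MeasurableSpace α] (S : α → α) (A : Set α) : Prop :=
  ∃ c : α → Fin 3, Measurable c ∧ ∀ x ∈ A, S x ∈ A → c x ≠ c (S x)

theorem measurable_dite_find {α β : Type*} [MeasurableSpace α] [MeasurableSpace β]
    {p : ℕ → α → Prop} [∀ n, DecidablePred (p n)] [DecidablePred fun x => ∃ n, p n x]
    (hp : ∀ n, Measurable (p n)) {f : ℕ → α → β} (hf : ∀ n, Measurable (f n)) (b : β) :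
    Measurable fun x => if h : ∃ n, p n x then f (Nat.find h) x else b :=
  Measurable.dite (s := {x | ∃ n, p n x})
    (Measurable.find (fun n => (hf n).comp measurable_subtype_coe)
      (fun n => measurable_subtype_coe (hp n).setOf) fun y => y.2)
    measurable_const (Measurable.exists hp).setOf

section Abstract

variable {α : Type*} {S : α → α}

theorem exists_iterate_mem_apply_iff {H : Set α} (hH : ∀ x ∈ H, S x ∈ H) (x : α) :
    (∃ m, S^[m] (S x) ∈ H) ↔ ∃ m, S^[m] x ∈ H :=
  ⟨fun ⟨m, hm⟩ => ⟨m + 1, hm⟩, fun ⟨m, hm⟩ => ⟨m, by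
    rw [← Function.iterate_succ_apply, Function.iterate_succ_apply']
    exact hH _ hm⟩⟩

theorem iterate_mem_iff_of_forall_iterate_mem_iff {P : Set α} {x : α}
    (h : ∀ k, (S^[k] x ∈ P ↔ S^[k + 1] x ∈ P)) (k : ℕ) : S^[k] x ∈ P ↔ x ∈ P := by
  induction k with
  | zero => rfl
  | succ k ih => exact (h k).symm.trans ih

variable [MeasurableSpace α] {A B : Set α}

theorem measurableSet_forall_iterate_mem (hS : Measurable S) {P : Set α}
    (hP : MeasurableSet P) : MeasurableSet {x | ∀ k, S^[k] x ∈ P} :=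
  (Measurable.forall fun k => hP.mem.comp (hS.iterate k)).setOf

theorem measurableSet_exists_iterate_mem (hS : Measurable S) {H : Set α}
    (hH : MeasurableSet H) : MeasurableSet {x | ∃ m, S^[m] x ∈ H} :=
  (Measurable.exists fun m => hH.mem.comp (hS.iterate m)).setOf

theorem BorelThreeColourable.mono (h : BorelThreeColourable S B) (hAB : A ⊆ B) :
    BorelThreeColourable S A :=
  let ⟨c, hc, hproper⟩ := h
  ⟨c, hc, fun x hx hSx => hproper x (hAB hx) (hAB hSx)⟩

theorem BorelThreeColourable.of_inter_of_diff {T : Set α} (hT : MeasurableSet T)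
    (hST : ∀ x, S x ∈ T ↔ x ∈ T) (h₁ : BorelThreeColourable S (A ∩ T))
    (h₂ : BorelThreeColourable S (A \ T)) : BorelThreeColourable S A := by
  classical
  obtain ⟨c₁, hc₁, hproper₁⟩ := h₁
  obtain ⟨c₂, hc₂, hproper₂⟩ := h₂
  refine ⟨T.piecewise c₁ c₂, hc₁.piecewise hT hc₂, fun x hx hSx => ?_⟩
  by_cases hxT : x ∈ T
  · have hSxT : S x ∈ T := (hST x).2 hxT
    simpa only [Set.piecewise_eq_of_mem _ _ _ hxT, Set.piecewise_eq_of_mem _ _ _ hSxT]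
      using hproper₁ x ⟨hx, hxT⟩ ⟨hSx, hSxT⟩
  · have hSxT : S x ∉ T := fun h => hxT ((hST x).1 h)
    simpa only [Set.piecewise_eq_of_notMem _ _ _ hxT, Set.piecewise_eq_of_notMem _ _ _ hSxT]
      using hproper₂ x ⟨hx, hxT⟩ ⟨hSx, hSxT⟩

open Fin.NatCast in
/-- Colour `x` by the colour of its first entry point into `H`, shifted by the entry time. -/
theorem BorelThreeColourable.inter_exists_iterate_mem (hS : Measurable S) {H : Set α}
    (hHm : MeasurableSet H) (hH : ∀ x ∈ H, S x ∈ H) (h : BorelThreeColourable S (A ∩ H)) :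
    BorelThreeColourable S (A ∩ {x | ∃ m, S^[m] x ∈ H}) := by
  classical
  obtain ⟨c, hc, hproper⟩ := h
  refine ⟨fun x => if h : ∃ m, S^[m] x ∈ H then c (S^[Nat.find h] x) + Nat.find h else 0,
    measurable_dite_find (fun m => hHm.mem.comp (hS.iterate m))
      (fun m => (measurable_from_top (f := (· + (m : Fin 3)))).comp (hc.comp (hS.iterate m))) 0,
    fun x ⟨hxA, (hx : ∃ m, S^[m] x ∈ H)⟩ ⟨hSxA, (hSx : ∃ m, S^[m] (S x) ∈ H)⟩ => ?_⟩
  dsimp only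
  rw [dif_pos hx, dif_pos hSx]
  cases hm : Nat.find hx with
  | zero =>
    have hxH : x ∈ H := (Nat.find_eq_zero hx).1 hm
    have hSm : Nat.find hSx = 0 := (Nat.find_eq_zero hSx).2 (hH x hxH)
    simpa only [hSm, Function.iterate_zero_apply, Nat.cast_zero, add_zero]
      using hproper x ⟨hxA, hxH⟩ ⟨hSxA, hH x hxH⟩
  | succ m =>
    have hSm : Nat.find hSx = m := by
      refine (Nat.succ_injective (hm.symm.trans (Nat.find_comp_succ hx hSx fun hxH => ?_))).symm
      exact Nat.succ_ne_zero m (hm.symm.trans ((Nat.find_eq_zero hx).2 hxH))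
    rw [hSm, Function.iterate_succ_apply, Nat.cast_succ, ← add_assoc]
    exact add_ne_left.2 one_ne_zero

/-- Colour `x` by the parity of the first time its orbit crosses the boundary of `P`, and when
that time is even, by whether `x ∈ P`. -/
theorem borelThreeColourable_exists_iterate_mem_xor (hS : Measurable S) {P : Set α}
    (hP : MeasurableSet P) :
    BorelThreeColourable S {x | ∃ k, ¬(S^[k] x ∈ P ↔ S^[k + 1] x ∈ P)} := by
  classical
  let col : ℕ → α → Fin 3 := fun k x => if Odd k then 2 else if x ∈ P then 0 else 1
  have hcol : ∀ k, Measurable (col k) := fun k => by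
    by_cases hk : Odd k
    · simpa only [col, hk, if_true] using measurable_const
    · simp only [col, hk, if_false]
      exact measurable_const.ite hP measurable_const
  refine ⟨fun x => if h : ∃ k, ¬(S^[k] x ∈ P ↔ S^[k + 1] x ∈ P) then col (Nat.find h) x else 0,
    measurable_dite_find
      (fun k => ((hP.mem.comp (hS.iterate k)).iff (hP.mem.comp (hS.iterate (k + 1)))).not)
      hcol 0,
    fun x (hx : ∃ k, _) (hSx : ∃ k, _) => ?_⟩
  dsimp only
  rw [dif_pos hx, dif_pos hSx]
  cases hk : Nat.find hx with
  | zero =>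
    have hxS : ¬(x ∈ P ↔ S x ∈ P) := (Nat.find_eq_zero hx).1 hk
    simp only [col]
    split_ifs <;> simp_all
  | succ m =>
    have hSm : Nat.find hSx = m := by
      refine (Nat.succ_injective (hk.symm.trans (Nat.find_comp_succ hx hSx fun hx0 => ?_))).symm
      exact Nat.succ_ne_zero m (hk.symm.trans ((Nat.find_eq_zero hx).2 hx0))
    simp only [col, hSm, Nat.odd_add_one]
    split_ifs <;> simp_all

theorem BorelThreeColourable.of_forall_iterate_mem_of_forall_iterate_notMem (hS : Measurable S)
    {P : Set α} (hP : MeasurableSet P)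
    (h₁ : BorelThreeColourable S (A ∩ {x | ∀ k, S^[k] x ∈ P}))
    (h₀ : BorelThreeColourable S (A ∩ {x | ∀ k, S^[k] x ∉ P})) :
    BorelThreeColourable S A := by
  have hH (Q : Set α) : ∀ x ∈ {x | ∀ k, S^[k] x ∈ Q}, S x ∈ {x | ∀ k, S^[k] x ∈ Q} :=
    fun x hx k => hx (k + 1)
  have hH₁ := measurableSet_forall_iterate_mem hS hP
  have hH₀ := measurableSet_forall_iterate_mem hS hP.compl
  refine .of_inter_of_diff (measurableSet_exists_iterate_mem hS hH₁)
    (exists_iterate_mem_apply_iff (hH P)) (h₁.inter_exists_iterate_mem hS hH₁ (hH P)) ?_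
  refine .of_inter_of_diff (measurableSet_exists_iterate_mem hS hH₀)
    (exists_iterate_mem_apply_iff (hH Pᶜ))
    ((h₀.inter_exists_iterate_mem hS hH₀ (hH Pᶜ)).mono
      (Set.inter_subset_inter_left _ Set.sdiff_subset)) ?_
  refine (borelThreeColourable_exists_iterate_mem_xor hS hP).mono
    fun x ⟨⟨_, hx₁⟩, hx₀⟩ => ?_
  by_contra hchange
  have hconst := iterate_mem_iff_of_forall_iterate_mem_iff fun k =>
    not_not.1 fun h => hchange ⟨k, h⟩
  by_cases hxP : x ∈ P
  · exact hx₁ ⟨0, fun k => (hconst k).2 hxP⟩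
  · exact hx₀ ⟨0, fun k => mt (hconst k).1 hxP⟩

end Abstract

section Sequences

variable {Q : Type*}

local instance : MeasurableSpace Q := ⊤

theorem measurable_seqShift : Measurable (seqShift : (ℕ → Q) → ℕ → Q) :=
  measurable_pi_lambda _ fun k => measurable_pi_apply (k + 1)

theorem seqShift_iterate_apply (X : ℕ → Q) (k i : ℕ) : seqShift^[k] X i = X (k + i) := by
  induction k generalizing X with
  | zero => rw [Function.iterate_zero_apply, Nat.zero_add]
  | succ k ih => rw [Function.iterate_succ_apply, ih, seqShift, Nat.add_right_comm]

theorem measurableSet_vecSet [Countable Q] (r : Q → Q → Prop) : MeasurableSet (vecSet r) :=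
  (Measurable.forall fun k => (measurable_of_countable fun p : Q × Q => ¬r p.1 p.2).comp
    ((measurable_pi_apply k).prodMk (measurable_pi_apply (k + 1)))).setOf

theorem measurableSet_window [Countable Q] {n : ℕ} (Φ : (Fin n → Q) → Prop) :
    MeasurableSet {X : ℕ → Q | Φ fun i => X i} :=
  ((measurable_of_countable Φ).comp
    (measurable_pi_lambda (fun (X : ℕ → Q) (i : Fin n) => X i) fun i =>
      measurable_pi_apply (i : ℕ))).setOf

theorem colour3_iff_borelThreeColourable {A : Set (ℕ → Q)} (hA : MeasurableSet A) :
    Colour3 A ↔ BorelThreeColourable seqShift A := by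
  classical
  constructor
  · rintro ⟨c, hc, hproper⟩
    refine ⟨Function.extend Subtype.val c fun _ => 0,
      (MeasurableEmbedding.subtype_coe hA).measurable_extend hc measurable_const,
      fun X hX hSX => ?_⟩
    rw [Subtype.val_injective.extend_apply c _ ⟨X, hX⟩,
      Subtype.val_injective.extend_apply c _ ⟨_, hSX⟩]
    exact hproper X hX hSX
  · rintro ⟨c, hc, hproper⟩
    exact ⟨fun X => c X, hc.comp measurable_subtype_coe, fun X hX hSX => hproper X hX hSX⟩

theorem isThin_iff_colour3_forall_iterate_mem [Countable Q] (r : Q → Q → Prop)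
    {P : Set (ℕ → Q)} (hP : MeasurableSet P) :
    IsThin r ↔ Colour3 (vecSet r ∩ {X | ∀ k, seqShift^[k] X ∈ P}) ∧
      Colour3 (vecSet r ∩ {X | ∀ k, seqShift^[k] X ∉ P}) := by
  have hpiece {H : Set (ℕ → Q)} (hH : MeasurableSet H) :=
    colour3_iff_borelThreeColourable ((measurableSet_vecSet r).inter hH)
  rw [IsThin, colour3_iff_borelThreeColourable (measurableSet_vecSet r),
    hpiece (measurableSet_forall_iterate_mem measurable_seqShift hP),
    hpiece (H := {X | ∀ k, seqShift^[k] X ∉ P})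
      (measurableSet_forall_iterate_mem measurable_seqShift hP.compl)]
  exact ⟨fun h => ⟨h.mono Set.inter_subset_left, h.mono Set.inter_subset_left⟩,
    fun ⟨h₁, h₀⟩ => h₁.of_forall_iterate_mem_of_forall_iterate_notMem measurable_seqShift hP h₀⟩

end Sequences

theorem colouring_algorithm_general {Q : Type*} [Countable Q]
    (r : Q → Q → Prop)
    (n : ℕ) (Φ : (Fin n → Q) → Prop) :
    IsThin r ↔
      (Colour3 {X : ℕ → Q | X ∈ vecSet r ∧ ∀ k, Φ (fun i => X (k + i))} ∧
       Colour3 {X : ℕ → Q | X ∈ vecSet r ∧ ∀ k, ¬ Φ (fun i => X (k + i))}) := by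
  simpa only [Set.inter_def, Set.mem_ofPred_eq, seqShift_iterate_apply] using
    isThin_iff_colour3_forall_iterate_mem r (measurableSet_window Φ)

/-- The colouring algorithm: for a countable quasi-order `Q` and an `n`-ary relation `Φ` on `Q`
(`n ≥ 1`), `Q` is thin iff both the `Φ`-homogeneous and the `¬Φ`-homogeneous parts of `Q⃗`
carry Borel 3-colourable shift (sub)graphs. -/
theorem colouring_algorithm {Q : Type*} [Countable Q]
    (r : Q → Q → Prop) (hr : Reflexive r) (ht : Transitive r)
    (n : ℕ) (hn : 1 ≤ n) (Φ : (Fin n → Q) → Prop) :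
    IsThin r ↔
      (Colour3 {X : ℕ → Q | X ∈ vecSet r ∧ ∀ k, Φ (fun i => X (k + i))} ∧
       Colour3 {X : ℕ → Q | X ∈ vecSet r ∧ ∀ k, ¬ Φ (fun i => X (k + i))}) :=
  colouring_algorithm_general r n Φ
end

section
/- If Q₁ and Q₂ are countable thin quasi-orders, then their disjoint union R = Q₁ ⊔ Q₂, ordered by p ≤_R q iff there is i ∈ {1,2} with p, q ∈ Qᵢ and p ≤_{Qᵢ} q, is thin. -/
open scoped Classical


namespace ThinDU

/-! ### `Nat.find` with default value `0` -/

noncomputable def findD {α : Type*} (p : ℕ → α → Prop) (x : α) : ℕ :=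
  if h : ∃ n, p n x then Nat.find h else 0

lemma findD_spec {α : Type*} {p : ℕ → α → Prop} {x : α} (h : ∃ n, p n x) :
    p (findD p x) x := by
  unfold findD; rw [dif_pos h]; exact Nat.find_spec h

lemma findD_min {α : Type*} {p : ℕ → α → Prop} {x : α} (h : ∃ n, p n x) {m : ℕ}
    (hm : m < findD p x) : ¬ p m x := by
  have hfd : findD p x = Nat.find h := dif_pos h
  rw [hfd] at hm
  exact Nat.find_min h hm

lemma findD_eq {α : Type*} {p : ℕ → α → Prop} {x : α} {n : ℕ} (h1 : p n x)
    (h2 : ∀ m < n, ¬ p m x) : findD p x = n := by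
  have hex : ∃ n, p n x := ⟨n, h1⟩
  unfold findD; rw [dif_pos hex]
  exact (Nat.find_eq_iff hex).2 ⟨h1, h2⟩

lemma measurable_findD {α : Type*} [MeasurableSpace α] {p : ℕ → α → Prop}
    (hp : ∀ n, MeasurableSet {x | p n x}) : Measurable (findD p) := by
  apply measurable_to_countable'
  intro n
  have hset : findD p ⁻¹' {n} =
      ({x | p n x} ∩ ⋂ m, ⋂ _ : m < n, {x | p m x}ᶜ) ∪
        ((⋂ m, {x | p m x}ᶜ) ∩ {_x : α | n = 0}) := by
    ext x
    simp only [Set.mem_preimage, Set.mem_singleton_iff, Set.mem_union, Set.mem_inter_iff,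
      Set.mem_iInter, Set.mem_compl_iff, Set.mem_setOf_eq]
    constructor
    · rintro rfl
      by_cases hex : ∃ m, p m x
      · exact Or.inl ⟨findD_spec hex, fun m hm => findD_min hex hm⟩
      · push_neg at hex
        refine Or.inr ⟨hex, ?_⟩
        unfold findD
        rw [dif_neg (by push_neg; exact hex)]
    · rintro (⟨h1, h2⟩ | ⟨hall, rfl⟩)
      · exact findD_eq h1 h2
      · unfold findD
        rw [dif_neg (by push_neg; exact hall)]
  rw [hset]
  exact ((hp n).inter (MeasurableSet.iInter fun m => MeasurableSet.iInter fun _ =>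
      (hp m).compl)).union
    ((MeasurableSet.iInter fun m => (hp m).compl).inter (MeasurableSet.const _))

/-- measurability of dynamically shifted tails -/
lemma measurable_shiftD {Q : Type*} [MeasurableSpace Q] {D : (ℕ → Q) → ℕ}
    (hD : Measurable D) : Measurable fun X : ℕ → Q => (fun k => X (D X + k)) := by
  intro S hS
  have hset : (fun X : ℕ → Q => (fun k => X (D X + k))) ⁻¹' S =
      ⋃ n, (D ⁻¹' {n}) ∩ ((fun X : ℕ → Q => (fun k => X (n + k))) ⁻¹' S) := by
    ext X
    simp only [Set.mem_preimage, Set.mem_iUnion, Set.mem_inter_iff, Set.mem_singleton_iff]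
    constructor
    · intro h; exact ⟨D X, rfl, h⟩
    · rintro ⟨n, rfl, h⟩; exact h
  rw [hset]
  exact MeasurableSet.iUnion fun n => (hD (measurableSet_singleton n)).inter
    ((measurable_pi_lambda _ fun k => measurable_pi_apply (n + k)) hS)

lemma meas_vecSet {Q : Type*} [MeasurableSpace Q] [Countable Q]
    (hQ : ∀ s : Set Q, MeasurableSet s) (r : Q → Q → Prop) :
    MeasurableSet (vecSet r) := by
  haveI : MeasurableSingletonClass Q := ⟨fun a => hQ _⟩
  have hset : vecSet r = ⋂ k, (fun Z : ℕ → Q => (Z k, Z (k + 1))) ⁻¹'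
      {p : Q × Q | r p.1 p.2}ᶜ := by
    ext Z
    simp only [vecSet, Set.mem_setOf_eq, Set.mem_iInter, Set.mem_preimage, Set.mem_compl_iff]
  rw [hset]
  exact MeasurableSet.iInter fun k =>
    ((measurable_pi_apply k).prodMk (measurable_pi_apply (k + 1)))
      ((Set.to_countable _).measurableSet.compl)

/-! ### The colouring on the disjoint union -/

variable {Q₁ Q₂ : Type*}

/-- a "switch" of sides at position `k` -/
def sw (X : ℕ → Q₁ ⊕ Q₂) (k : ℕ) : Prop := (X k).isLeft ≠ (X (k + 1)).isLeft

/-- index from which on there is no switch (0 if switches occur arbitrarily late) -/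
noncomputable def stabN (X : ℕ → Q₁ ⊕ Q₂) : ℕ :=
  findD (fun n X => ∀ k, n ≤ k → ¬ sw X k) X

/-- first switch (0 if none) -/
noncomputable def fsw (X : ℕ → Q₁ ⊕ Q₂) : ℕ := findD (fun n X => sw X n) X

def sideC (q : Q₁ ⊕ Q₂) : Fin 3 := if q.isLeft then 0 else 1

def offs (n : ℕ) : Fin 3 := if n = 0 then 0 else if n % 2 = 0 then 1 else 2

lemma offs_succ_ne (m : ℕ) : offs (m + 1) ≠ offs m := by
  rcases Nat.eq_zero_or_pos m with rfl | hm
  · decide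
  · have h2 : ¬ (m + 1 = 0) := by omega
    have h3 : ¬ (m = 0) := by omega
    rcases Nat.mod_two_eq_zero_or_one m with h | h
    · have h' : (m + 1) % 2 = 1 := by omega
      simp only [offs, h2, h3, h, h', if_false, if_true]
      decide
    · have h' : (m + 1) % 2 = 0 := by omega
      simp only [offs, h2, h3, h, h', if_false, if_true]
      decide

lemma sideC_ne_two (q : Q₁ ⊕ Q₂) : sideC q ≠ 2 := by
  unfold sideC; split <;> decide

lemma sideC_ne {q q' : Q₁ ⊕ Q₂} (h : q.isLeft ≠ q'.isLeft) : sideC q ≠ sideC q' := by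
  unfold sideC
  cases hb : q.isLeft <;> cases hb' : q'.isLeft <;> simp_all

/-- The colouring. -/
noncomputable def C (e₁ e₂ : (ℕ → Q₁ ⊕ Q₂) → Fin 3) (X : ℕ → Q₁ ⊕ Q₂) : Fin 3 :=
  if ∃ n, ∀ k, n ≤ k → ¬ sw X k then
    (if (X (stabN X)).isLeft then e₁ (fun k => X (stabN X + k))
      else e₂ (fun k => X (stabN X + k))) + offs (stabN X)
  else
    if fsw X % 2 = 1 then 2 else sideC (X 0)

end ThinDU
namespace ThinDU

variable {Q₁ Q₂ : Type*}

section Meas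

variable [MeasurableSpace (Q₁ ⊕ Q₂)] (hQ : ∀ s : Set (Q₁ ⊕ Q₂), MeasurableSet s)
include hQ

lemma meas_isLeft (j : ℕ) : Measurable fun X : ℕ → Q₁ ⊕ Q₂ => (X j).isLeft := by
  have hsum : Measurable (Sum.isLeft : Q₁ ⊕ Q₂ → Bool) := fun _ _ => hQ _
  exact hsum.comp (measurable_pi_apply j)

lemma meas_sw (k : ℕ) : MeasurableSet {X : ℕ → Q₁ ⊕ Q₂ | sw X k} :=
  ((meas_isLeft hQ k).prodMk (meas_isLeft hQ (k + 1)))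
    ((Set.to_countable {p : Bool × Bool | p.1 ≠ p.2}).measurableSet)

lemma meas_nosw (n : ℕ) : MeasurableSet {X : ℕ → Q₁ ⊕ Q₂ | ∀ k, n ≤ k → ¬ sw X k} := by
  have hset : {X : ℕ → Q₁ ⊕ Q₂ | ∀ k, n ≤ k → ¬ sw X k} =
      ⋂ k, ⋂ _ : n ≤ k, {X : ℕ → Q₁ ⊕ Q₂ | sw X k}ᶜ := by
    ext X
    simp only [Set.mem_setOf_eq, Set.mem_iInter, Set.mem_compl_iff]
  rw [hset]
  exact MeasurableSet.iInter fun k => MeasurableSet.iInter fun _ => (meas_sw hQ k).compl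

lemma meas_evA : MeasurableSet {X : ℕ → Q₁ ⊕ Q₂ | ∃ n, ∀ k, n ≤ k → ¬ sw X k} := by
  have hset : {X : ℕ → Q₁ ⊕ Q₂ | ∃ n, ∀ k, n ≤ k → ¬ sw X k} =
      ⋃ n, {X : ℕ → Q₁ ⊕ Q₂ | ∀ k, n ≤ k → ¬ sw X k} := by
    ext X; simp only [Set.mem_setOf_eq, Set.mem_iUnion]
  rw [hset]
  exact MeasurableSet.iUnion fun n => meas_nosw hQ n

lemma meas_stabN : Measurable (stabN : (ℕ → Q₁ ⊕ Q₂) → ℕ) :=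
  measurable_findD fun n => meas_nosw hQ n

lemma meas_fsw : Measurable (fsw : (ℕ → Q₁ ⊕ Q₂) → ℕ) :=
  measurable_findD fun n => meas_sw hQ n

lemma meas_tail : Measurable fun X : ℕ → Q₁ ⊕ Q₂ => (fun k => X (stabN X + k)) :=
  measurable_shiftD (meas_stabN hQ)

lemma meas_C {e₁ e₂ : (ℕ → Q₁ ⊕ Q₂) → Fin 3} (he₁ : Measurable e₁)
    (he₂ : Measurable e₂) : Measurable (C e₁ e₂) := by
  unfold C
  apply Measurable.ite (meas_evA hQ)
  · -- the branch with the tail colourings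
    have htail := meas_tail hQ
    have hside : Measurable fun X : ℕ → Q₁ ⊕ Q₂ => (X (stabN X)).isLeft := by
      have : (fun X : ℕ → Q₁ ⊕ Q₂ => (X (stabN X)).isLeft) =
          (fun X : ℕ → Q₁ ⊕ Q₂ => ((fun k => X (stabN X + k)) 0).isLeft) := rfl
      rw [this]
      have hsum : Measurable (Sum.isLeft : Q₁ ⊕ Q₂ → Bool) := fun _ _ => hQ _
      exact hsum.comp ((measurable_pi_apply 0).comp htail)
    have hite : Measurable fun X : ℕ → Q₁ ⊕ Q₂ =>
        (if (X (stabN X)).isLeft then e₁ (fun k => X (stabN X + k))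
          else e₂ (fun k => X (stabN X + k))) := by
      apply Measurable.ite
      · exact hside (MeasurableSet.singleton true)
      · exact he₁.comp htail
      · exact he₂.comp htail
    have hoffs : Measurable fun X : ℕ → Q₁ ⊕ Q₂ => offs (stabN X) :=
      (measurable_of_countable offs).comp (meas_stabN hQ)
    exact (measurable_of_countable (fun p : Fin 3 × Fin 3 => p.1 + p.2)).comp
      (hite.prodMk hoffs)
  · apply Measurable.ite
    · exact meas_fsw hQ (Set.to_countable {n : ℕ | n % 2 = 1}).measurableSet
    · exact measurable_const
    · have hsc : Measurable (sideC : Q₁ ⊕ Q₂ → Fin 3) := fun _ _ => hQ _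
      exact hsc.comp (measurable_pi_apply 0)

end Meas

end ThinDU
namespace ThinDU

variable {Q₁ Q₂ : Type*}

lemma C_proper (e₁ e₂ : (ℕ → Q₁ ⊕ Q₂) → Fin 3) (r : Q₁ ⊕ Q₂ → Q₁ ⊕ Q₂ → Prop)
    (he₁ : ∀ Y, Y ∈ vecSet r → (∀ k, (Y k).isLeft = true) → e₁ Y ≠ e₁ (seqShift Y))
    (he₂ : ∀ Y, Y ∈ vecSet r → (∀ k, (Y k).isLeft = false) → e₂ Y ≠ e₂ (seqShift Y))
    (X : ℕ → Q₁ ⊕ Q₂) (hX : X ∈ vecSet r) :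
    C e₁ e₂ X ≠ C e₁ e₂ (seqShift X) := by
  set S := seqShift X with hSdef
  by_cases hA : ∃ n, ∀ k, n ≤ k → ¬ sw X k
  · -- eventually no switches
    have hA' : ∃ n, ∀ k, n ≤ k → ¬ sw S k := by
      obtain ⟨n, hn⟩ := hA
      exact ⟨n, fun k hk => hn (k + 1) (by omega)⟩
    have hNspec : ∀ k, stabN X ≤ k → ¬ sw X k := findD_spec (p := fun n X => ∀ k, n ≤ k → ¬ sw X k) hA
    rcases Nat.eq_zero_or_pos (stabN X) with hN0 | hNpos
    · -- no switches at all
      have hnosw : ∀ k, ¬ sw X k := fun k => hNspec k (by omega)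
      have hS0 : stabN S = 0 :=
        findD_eq (fun k _ => hnosw (k + 1)) (fun m hm => absurd hm (Nat.not_lt_zero m))
      have hconst : ∀ k, (X k).isLeft = (X 0).isLeft := by
        intro k
        induction k with
        | zero => rfl
        | succ n ih =>
          have h := hnosw n
          unfold sw at h
          rw [not_ne_iff] at h
          rw [← h]; exact ih
      unfold C
      rw [if_pos hA, if_pos hA', hN0, hS0]
      simp only [Nat.zero_add]
      have hoffs0 : offs 0 = 0 := rfl
      rw [hoffs0, add_zero, add_zero]
      have hxs : (S 0).isLeft = (X 0).isLeft := hconst 1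
      cases hb : (X 0).isLeft with
      | true =>
        have h1 : (S 0).isLeft = true := hxs.trans hb
        simp only [hb, h1, if_true]
        exact he₁ X hX (fun k => (hconst k).trans hb)
      | false =>
        have h1 : (S 0).isLeft = false := hxs.trans hb
        simp only [hb, h1, Bool.false_eq_true, if_false]
        exact he₂ X hX (fun k => (hconst k).trans hb)
    · obtain ⟨m, hm⟩ : ∃ m, stabN X = m + 1 := ⟨stabN X - 1, by omega⟩
      have hNmin : ∀ j, j < stabN X → ¬ ∀ k, j ≤ k → ¬ sw X k := fun j hj => findD_min hA hj
      have hS' : stabN S = m := by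
        apply findD_eq
        · intro k hk
          exact hNspec (k + 1) (by omega)
        · intro j hj hforall
          refine hNmin (j + 1) (by omega) (fun k hk => ?_)
          have hthis := hforall (k - 1) (by omega)
          have hk1 : k - 1 + 1 = k := by omega
          rw [← hk1]
          exact hthis
      have hswm : (S (stabN S)).isLeft = (X (stabN X)).isLeft := by
        rw [hS', hm]; rfl
      have htails : (fun k => S (stabN S + k)) = (fun k => X (stabN X + k)) := by
        funext k
        rw [hS', hm]
        show X (m + k + 1) = X (m + 1 + k)
        congr 1
        omega
      unfold C
      rw [if_pos hA, if_pos hA', htails, hswm, hS', hm]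
      intro heq
      exact offs_succ_ne m (add_left_cancel heq)
  · -- switches occur arbitrarily late
    have hA' : ¬ ∃ n, ∀ k, n ≤ k → ¬ sw S k := by
      rintro ⟨n, hn⟩
      refine hA ⟨n + 1, fun k hk => ?_⟩
      have hthis := hn (k - 1) (by omega)
      have hk1 : k - 1 + 1 = k := by omega
      rw [← hk1]
      exact hthis
    have hall : ∀ n, ∃ k, n ≤ k ∧ sw X k := by
      have h := hA; push_neg at h; exact h
    have hex : ∃ k, sw X k := (hall 0).imp fun k hk => hk.2
    have hmsw : sw X (fsw X) := findD_spec (p := fun n X => sw X n) hex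
    have hmmin : ∀ j, j < fsw X → ¬ sw X j := fun j hj => findD_min hex hj
    unfold C
    rw [if_neg hA, if_neg hA']
    rcases Nat.eq_zero_or_pos (fsw X) with hm0 | hmpos
    · rw [hm0] at hmsw
      rw [hm0, if_neg (by norm_num)]
      by_cases hp : fsw S % 2 = 1
      · rw [if_pos hp]
        exact fun h => sideC_ne_two (X 0) h
      · rw [if_neg hp]
        exact sideC_ne hmsw
    · obtain ⟨m, hm⟩ : ∃ m, fsw X = m + 1 := ⟨fsw X - 1, by omega⟩
      have hfS : fsw S = m := by
        apply findD_eq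
        · rw [hm] at hmsw; exact hmsw
        · intro j hj
          exact hmmin (j + 1) (by omega)
      rw [hm, hfS]
      rcases Nat.mod_two_eq_zero_or_one m with hpar | hpar
      · rw [if_pos (by omega), if_neg (by omega)]
        exact fun h => sideC_ne_two (S 0) h.symm
      · rw [if_neg (by omega), if_pos (by omega)]
        exact sideC_ne_two (X 0)

end ThinDU
namespace ThinDU

variable {Q₁ Q₂ : Type*}

noncomputable def gl [Nonempty Q₁] : Q₁ ⊕ Q₂ → Q₁ := Sum.elim id fun _ => Classical.arbitrary Q₁

noncomputable def gr [Nonempty Q₂] : Q₁ ⊕ Q₂ → Q₂ := Sum.elim (fun _ => Classical.arbitrary Q₂) id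

def gE [IsEmpty Q₁] : Q₁ ⊕ Q₂ → Q₂ := Sum.elim (fun a => isEmptyElim a) id

def gE' [IsEmpty Q₂] : Q₁ ⊕ Q₂ → Q₁ := Sum.elim id fun b => isEmptyElim b

noncomputable def eL [Nonempty Q₁] (r₁ : Q₁ → Q₁ → Prop) (c₁ : (vecSet r₁) → Fin 3)
    (Y : ℕ → Q₁ ⊕ Q₂) : Fin 3 :=
  if h : (gl ∘ Y) ∈ vecSet r₁ then c₁ ⟨gl ∘ Y, h⟩ else 0

noncomputable def eR [Nonempty Q₂] (r₂ : Q₂ → Q₂ → Prop) (c₂ : (vecSet r₂) → Fin 3)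
    (Y : ℕ → Q₁ ⊕ Q₂) : Fin 3 :=
  if h : (gr ∘ Y) ∈ vecSet r₂ then c₂ ⟨gr ∘ Y, h⟩ else 0

lemma exists_inr {x : Q₁ ⊕ Q₂} (h : x.isLeft = false) : ∃ b, x = Sum.inr b := by
  cases x with
  | inl a => simp at h
  | inr b => exact ⟨b, rfl⟩

lemma meas_eL [Nonempty Q₁] [Countable Q₁] [MeasurableSpace Q₁] [MeasurableSpace (Q₁ ⊕ Q₂)]
    (hq1 : ∀ s : Set Q₁, MeasurableSet s) (hq : ∀ s : Set (Q₁ ⊕ Q₂), MeasurableSet s)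
    {r₁ : Q₁ → Q₁ → Prop} {c₁ : (vecSet r₁) → Fin 3} (hc : Measurable c₁) :
    Measurable (eL (Q₂ := Q₂) r₁ c₁) := by
  have hmap : Measurable fun Y : ℕ → Q₁ ⊕ Q₂ => gl ∘ Y := by
    apply measurable_pi_lambda
    intro k
    have hgl : Measurable (gl : Q₁ ⊕ Q₂ → Q₁) := fun s _ => hq _
    exact hgl.comp (measurable_pi_apply k)
  have hct : Measurable (fun Z : ℕ → Q₁ => if h : Z ∈ vecSet r₁ then c₁ ⟨Z, h⟩ else 0) :=
    Measurable.dite (f := c₁) hc measurable_const (meas_vecSet hq1 r₁)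
  exact hct.comp hmap

lemma meas_eR [Nonempty Q₂] [Countable Q₂] [MeasurableSpace Q₂] [MeasurableSpace (Q₁ ⊕ Q₂)]
    (hq2 : ∀ s : Set Q₂, MeasurableSet s) (hq : ∀ s : Set (Q₁ ⊕ Q₂), MeasurableSet s)
    {r₂ : Q₂ → Q₂ → Prop} {c₂ : (vecSet r₂) → Fin 3} (hc : Measurable c₂) :
    Measurable (eR (Q₁ := Q₁) r₂ c₂) := by
  have hmap : Measurable fun Y : ℕ → Q₁ ⊕ Q₂ => gr ∘ Y := by
    apply measurable_pi_lambda
    intro k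
    have hgr : Measurable (gr : Q₁ ⊕ Q₂ → Q₂) := fun s _ => hq _
    exact hgr.comp (measurable_pi_apply k)
  have hct : Measurable (fun Z : ℕ → Q₂ => if h : Z ∈ vecSet r₂ then c₂ ⟨Z, h⟩ else 0) :=
    Measurable.dite (f := c₂) hc measurable_const (meas_vecSet hq2 r₂)
  exact hct.comp hmap

lemma eL_proper [Nonempty Q₁] {r₁ : Q₁ → Q₁ → Prop} {c₁ : (vecSet r₁) → Fin 3}
    (R : Q₁ ⊕ Q₂ → Q₁ ⊕ Q₂ → Prop)
    (hRl : ∀ a b, r₁ a b → R (Sum.inl a) (Sum.inl b))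
    (hp₁ : ∀ (Z : ℕ → Q₁) (hZ : Z ∈ vecSet r₁) (hZ' : seqShift Z ∈ vecSet r₁),
      c₁ ⟨Z, hZ⟩ ≠ c₁ ⟨seqShift Z, hZ'⟩) :
    ∀ Y, Y ∈ vecSet R → (∀ k, (Y k).isLeft = true) →
      eL r₁ c₁ Y ≠ eL r₁ c₁ (seqShift Y) := by
  intro Y hY hleft
  have hmem : gl ∘ Y ∈ vecSet r₁ := by
    intro k
    obtain ⟨a, ha⟩ := Sum.isLeft_iff.mp (hleft k)
    obtain ⟨b, hb⟩ := Sum.isLeft_iff.mp (hleft (k + 1))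
    intro hr
    apply hY k
    rw [ha, hb]
    apply hRl
    have h1 : (gl ∘ Y) k = a := by rw [Function.comp_apply, ha]; rfl
    have h2 : (gl ∘ Y) (k + 1) = b := by rw [Function.comp_apply, hb]; rfl
    rw [h1, h2] at hr
    exact hr
  have hmem' : gl ∘ seqShift Y ∈ vecSet r₁ := fun k => hmem (k + 1)
  have hE1 : eL r₁ c₁ Y = c₁ ⟨gl ∘ Y, hmem⟩ := dif_pos hmem
  have hE2 : eL (Q₂ := Q₂) r₁ c₁ (seqShift Y) = c₁ ⟨gl ∘ seqShift Y, hmem'⟩ := dif_pos hmem'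
  rw [hE1, hE2]
  exact hp₁ (gl ∘ Y) hmem hmem'

lemma eR_proper [Nonempty Q₂] {r₂ : Q₂ → Q₂ → Prop} {c₂ : (vecSet r₂) → Fin 3}
    (R : Q₁ ⊕ Q₂ → Q₁ ⊕ Q₂ → Prop)
    (hRr : ∀ a b, r₂ a b → R (Sum.inr a) (Sum.inr b))
    (hp₂ : ∀ (Z : ℕ → Q₂) (hZ : Z ∈ vecSet r₂) (hZ' : seqShift Z ∈ vecSet r₂),
      c₂ ⟨Z, hZ⟩ ≠ c₂ ⟨seqShift Z, hZ'⟩) :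
    ∀ Y, Y ∈ vecSet R → (∀ k, (Y k).isLeft = false) →
      eR r₂ c₂ Y ≠ eR r₂ c₂ (seqShift Y) := by
  intro Y hY hleft
  have hmem : gr ∘ Y ∈ vecSet r₂ := by
    intro k
    obtain ⟨a, ha⟩ := exists_inr (hleft k)
    obtain ⟨b, hb⟩ := exists_inr (hleft (k + 1))
    intro hr
    apply hY k
    rw [ha, hb]
    apply hRr
    have h1 : (gr ∘ Y) k = a := by rw [Function.comp_apply, ha]; rfl
    have h2 : (gr ∘ Y) (k + 1) = b := by rw [Function.comp_apply, hb]; rfl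
    rw [h1, h2] at hr
    exact hr
  have hmem' : gr ∘ seqShift Y ∈ vecSet r₂ := fun k => hmem (k + 1)
  have hE1 : eR r₂ c₂ Y = c₂ ⟨gr ∘ Y, hmem⟩ := dif_pos hmem
  have hE2 : eR (Q₁ := Q₁) r₂ c₂ (seqShift Y) = c₂ ⟨gr ∘ seqShift Y, hmem'⟩ := dif_pos hmem'
  rw [hE1, hE2]
  exact hp₂ (gr ∘ Y) hmem hmem'

lemma left_empty [IsEmpty Q₁] {r₂ : Q₂ → Q₂ → Prop}
    (R : Q₁ ⊕ Q₂ → Q₁ ⊕ Q₂ → Prop)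
    (hRr : ∀ a b, r₂ a b → R (Sum.inr a) (Sum.inr b))
    (h₂ : IsThin r₂) : IsThin R := by
  letI : MeasurableSpace Q₁ := ⊤
  letI : MeasurableSpace Q₂ := ⊤
  letI : MeasurableSpace (Q₁ ⊕ Q₂) := ⊤
  obtain ⟨c₂, hm₂, hp₂⟩ := h₂
  have hmem : ∀ X : ℕ → Q₁ ⊕ Q₂, X ∈ vecSet R → gE ∘ X ∈ vecSet r₂ := by
    intro X hX k
    cases hk : X k with
    | inl a => exact isEmptyElim a
    | inr b =>
      cases hk1 : X (k + 1) with
      | inl a => exact isEmptyElim a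
      | inr b' =>
        intro hr
        apply hX k
        rw [hk, hk1]
        apply hRr
        have h1 : (gE ∘ X) k = b := by rw [Function.comp_apply, hk]; rfl
        have h2 : (gE ∘ X) (k + 1) = b' := by rw [Function.comp_apply, hk1]; rfl
        rw [h1, h2] at hr
        exact hr
  refine ⟨fun X => c₂ ⟨gE ∘ X.val, hmem X.val X.2⟩, ?_, ?_⟩
  · refine hm₂.comp (Measurable.subtype_mk ?_)
    apply measurable_pi_lambda
    intro k
    have hg : Measurable (gE : Q₁ ⊕ Q₂ → Q₂) := measurable_from_top
    exact hg.comp ((measurable_pi_apply k).comp measurable_subtype_coe)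
  · intro X hX hX'
    exact hp₂ (gE ∘ X) (hmem X hX) (hmem (seqShift X) hX')

lemma right_empty [IsEmpty Q₂] {r₁ : Q₁ → Q₁ → Prop}
    (R : Q₁ ⊕ Q₂ → Q₁ ⊕ Q₂ → Prop)
    (hRl : ∀ a b, r₁ a b → R (Sum.inl a) (Sum.inl b))
    (h₁ : IsThin r₁) : IsThin R := by
  letI : MeasurableSpace Q₁ := ⊤
  letI : MeasurableSpace Q₂ := ⊤
  letI : MeasurableSpace (Q₁ ⊕ Q₂) := ⊤
  obtain ⟨c₁, hm₁, hp₁⟩ := h₁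
  have hmem : ∀ X : ℕ → Q₁ ⊕ Q₂, X ∈ vecSet R → gE' ∘ X ∈ vecSet r₁ := by
    intro X hX k
    cases hk : X k with
    | inr b => exact isEmptyElim b
    | inl a =>
      cases hk1 : X (k + 1) with
      | inr b => exact isEmptyElim b
      | inl a' =>
        intro hr
        apply hX k
        rw [hk, hk1]
        apply hRl
        have h1 : (gE' ∘ X) k = a := by rw [Function.comp_apply, hk]; rfl
        have h2 : (gE' ∘ X) (k + 1) = a' := by rw [Function.comp_apply, hk1]; rfl
        rw [h1, h2] at hr
        exact hr
  refine ⟨fun X => c₁ ⟨gE' ∘ X.val, hmem X.val X.2⟩, ?_, ?_⟩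
  · refine hm₁.comp (Measurable.subtype_mk ?_)
    apply measurable_pi_lambda
    intro k
    have hg : Measurable (gE' : Q₁ ⊕ Q₂ → Q₁) := measurable_from_top
    exact hg.comp ((measurable_pi_apply k).comp measurable_subtype_coe)
  · intro X hX hX'
    exact hp₁ (gE' ∘ X) (hmem X hX) (hmem (seqShift X) hX')

lemma main_case [Countable Q₁] [Countable Q₂] [Nonempty Q₁] [Nonempty Q₂]
    {r₁ : Q₁ → Q₁ → Prop} {r₂ : Q₂ → Q₂ → Prop} (R : Q₁ ⊕ Q₂ → Q₁ ⊕ Q₂ → Prop)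
    (hRl : ∀ a b, r₁ a b → R (Sum.inl a) (Sum.inl b))
    (hRr : ∀ a b, r₂ a b → R (Sum.inr a) (Sum.inr b))
    (h₁ : IsThin r₁) (h₂ : IsThin r₂) : IsThin R := by
  letI : MeasurableSpace Q₁ := ⊤
  letI : MeasurableSpace Q₂ := ⊤
  letI : MeasurableSpace (Q₁ ⊕ Q₂) := ⊤
  obtain ⟨c₁, hm₁, hp₁⟩ := h₁
  obtain ⟨c₂, hm₂, hp₂⟩ := h₂
  refine ⟨fun X => C (eL r₁ c₁) (eR r₂ c₂) X.val, ?_, ?_⟩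
  · refine (meas_C (fun s => MeasurableSpace.measurableSet_top) ?_ ?_).comp
      measurable_subtype_coe
    · exact meas_eL (fun s => MeasurableSpace.measurableSet_top)
        (fun s => MeasurableSpace.measurableSet_top) hm₁
    · exact meas_eR (fun s => MeasurableSpace.measurableSet_top)
        (fun s => MeasurableSpace.measurableSet_top) hm₂
  · intro X hX hX'
    exact C_proper (eL r₁ c₁) (eR r₂ c₂) R (eL_proper R hRl hp₁) (eR_proper R hRr hp₂) X hX

end ThinDU

/-- The disjoint union of two countable thin quasi-orders is thin. -/
theorem thin_disjoint_union {Q₁ Q₂ : Type*} [Countable Q₁] [Countable Q₂]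
    (r₁ : Q₁ → Q₁ → Prop) (r₂ : Q₂ → Q₂ → Prop)
    (hr₁ : Reflexive r₁) (ht₁ : Transitive r₁)
    (hr₂ : Reflexive r₂) (ht₂ : Transitive r₂)
    (h₁ : IsThin r₁) (h₂ : IsThin r₂) :
    IsThin (fun p q : Q₁ ⊕ Q₂ =>
      match p, q with
      | Sum.inl a, Sum.inl b => r₁ a b
      | Sum.inr a, Sum.inr b => r₂ a b
      | _, _ => False) := by
  rcases isEmpty_or_nonempty Q₁ with hQ1 | hQ1
  · exact ThinDU.left_empty _ (fun a b h => h) h₂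
  · rcases isEmpty_or_nonempty Q₂ with hQ2 | hQ2
    · exact ThinDU.right_empty _ (fun a b h => h) h₁
    · exact ThinDU.main_case _ (fun a b h => h) (fun a b h => h) h₁ h₂
end

section
/- If Q is a countable thin quasi-order, then 𝓕𝓣_Q, the quasi-order of finite Q-labeled trees under ≤_m, is thin. Here (T₁,l₁) ≤_m (T₂,l₂) iff there is a map f : T₁ → T₂ such that for all x, y ∈ T₁, x ≤_{T₁} y implies f(x) ≤_{T₂} f(y), and l₁(x) ≤_Q l₂(f(x)) for all x ∈ T₁. -/
/-- A finite `Q`-labeled tree: a nonempty prefix-closed finite set of finite sequences of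
naturals, ordered by the prefix relation, together with a labeling of its nodes in `Q`. -/
structure FinLabeledTree (Q : Type*) where
  nodes : Finset (List ℕ)
  nonempty : nodes.Nonempty
  prefixClosed : ∀ s ∈ nodes, ∀ t : List ℕ, t <+: s → t ∈ nodes
  label : {s : List ℕ // s ∈ nodes} → Q

/-- The order `≤ₘ` on finite labeled trees: a (not necessarily injective) order-preserving map
of the node sets along which labels are dominated. -/
def TreeLEm {Q : Type*} (r : Q → Q → Prop) (T₁ T₂ : FinLabeledTree Q) : Prop :=
  ∃ f : {s : List ℕ // s ∈ T₁.nodes} → {s : List ℕ // s ∈ T₂.nodes},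
    (∀ x y : {s : List ℕ // s ∈ T₁.nodes}, x.1 <+: y.1 → (f x).1 <+: (f y).1) ∧
    ∀ x, r (T₁.label x) (T₂.label (f x))

/-! ### Auxiliary material for the proof -/

namespace ThinTrees

open Classical

variable {Q : Type*}

/-- The root (empty sequence) belongs to every finite labeled tree. -/
theorem root_mem (T : FinLabeledTree Q) : ([] : List ℕ) ∈ T.nodes := by
  obtain ⟨s, hs⟩ := T.nonempty
  exact T.prefixClosed s hs [] List.nil_prefix

/-- The label of the root. -/
def rootLabel (T : FinLabeledTree Q) : Q := T.label ⟨[], root_mem T⟩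

/-- Node set of the cone (subtree) above the child `c` of the root, re-rooted at `c`. -/
def coneNodes (T : FinLabeledTree Q) (c : ℕ) : Finset (List ℕ) :=
  (T.nodes.filter fun l => l.head? = some c).image List.tail

theorem mem_coneNodes {T : FinLabeledTree Q} {c : ℕ} {s : List ℕ} :
    s ∈ coneNodes T c ↔ c :: s ∈ T.nodes := by
  constructor
  · rintro hs
    obtain ⟨l, hl, rfl⟩ := Finset.mem_image.mp hs
    obtain ⟨hl1, hl2⟩ := Finset.mem_filter.mp hl
    cases l with
    | nil => simp at hl2
    | cons a t =>
      simp only [List.head?_cons, Option.some.injEq] at hl2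
      subst hl2
      simpa using hl1
  · intro hs
    exact Finset.mem_image.mpr ⟨c :: s, Finset.mem_filter.mpr ⟨hs, by simp⟩, rfl⟩

/-- The cone above the child `c` of the root, as a labeled tree. -/
def cone (T : FinLabeledTree Q) (c : ℕ) (hc : [c] ∈ T.nodes) : FinLabeledTree Q where
  nodes := coneNodes T c
  nonempty := ⟨[], mem_coneNodes.mpr hc⟩
  prefixClosed := by
    intro s hs t hts
    exact mem_coneNodes.mpr
      (T.prefixClosed _ (mem_coneNodes.mp hs) _ (List.cons_prefix_cons.mpr ⟨rfl, hts⟩))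
  label := fun x => T.label ⟨c :: x.1, mem_coneNodes.mp x.2⟩

theorem cone_card_lt (T : FinLabeledTree Q) (c : ℕ) (hc : [c] ∈ T.nodes) :
    (cone T c hc).nodes.card < T.nodes.card := by
  have h1 : (cone T c hc).nodes.card ≤ (T.nodes.filter fun l => l.head? = some c).card :=
    Finset.card_image_le
  have h2 : (T.nodes.filter fun l => l.head? = some c) ⊆ T.nodes.erase [] := by
    intro l hl
    obtain ⟨hl1, hl2⟩ := Finset.mem_filter.mp hl
    refine Finset.mem_erase.mpr ⟨?_, hl1⟩
    rintro rfl
    simp at hl2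
  have h3 : (T.nodes.erase []).card < T.nodes.card :=
    Finset.card_erase_lt_of_mem (root_mem T)
  exact lt_of_le_of_lt (le_trans h1 (Finset.card_le_card h2)) h3

variable {r : Q → Q → Prop}

theorem treeLEm_refl (hr : Reflexive r) (T : FinLabeledTree Q) : TreeLEm r T T :=
  ⟨id, fun _ _ h => h, fun _ => hr _⟩

theorem treeLEm_trans (ht : Transitive r) {T₁ T₂ T₃ : FinLabeledTree Q}
    (h12 : TreeLEm r T₁ T₂) (h23 : TreeLEm r T₂ T₃) : TreeLEm r T₁ T₃ := by
  obtain ⟨f, hf, hlf⟩ := h12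
  obtain ⟨g, hg, hlg⟩ := h23
  exact ⟨g ∘ f, fun x y h => hg _ _ (hf _ _ h), fun x => ht (hlf x) (hlg (f x))⟩

/-- A cone embeds into the ambient tree. -/
theorem cone_le (hr : Reflexive r) (T : FinLabeledTree Q) (c : ℕ) (hc : [c] ∈ T.nodes) :
    TreeLEm r (cone T c hc) T :=
  ⟨fun x => ⟨c :: x.1, mem_coneNodes.mp x.2⟩,
   fun x y h => List.cons_prefix_cons.mpr ⟨rfl, h⟩,
   fun _ => hr _⟩

/-- Gluing lemma: if the root labels are related and every child cone embeds into `T'`,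
then `T` embeds into `T'`. -/
theorem treeLEm_of_forall_cone {T T' : FinLabeledTree Q}
    (hroot : r (rootLabel T) (rootLabel T'))
    (hall : ∀ c (hc : [c] ∈ T.nodes), TreeLEm r (cone T c hc) T') :
    TreeLEm r T T' := by
  choose g hg hgl using hall
  have child_mem : ∀ {c : ℕ} {s : List ℕ}, (c :: s) ∈ T.nodes → [c] ∈ T.nodes := by
    intro c s h
    exact T.prefixClosed _ h [c] ⟨s, rfl⟩
  refine ⟨fun x =>
    match x with
    | ⟨[], _⟩ => ⟨[], root_mem T'⟩
    | ⟨c :: s, h⟩ => g c (child_mem h) ⟨s, mem_coneNodes.mpr h⟩, ?_, ?_⟩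
  · rintro ⟨l, hl⟩ ⟨l', hl'⟩ hpre
    match l, hl, l', hl', hpre with
    | [], _, _, _, _ => exact List.nil_prefix
    | (c :: s), h, [], h', hpre => exact absurd (List.prefix_nil.mp hpre) (by simp)
    | (c :: s), h, (c' :: s'), h', hpre =>
      obtain ⟨rfl, hss⟩ := List.cons_prefix_cons.mp hpre
      exact hg c (child_mem h) ⟨s, mem_coneNodes.mpr h⟩ ⟨s', mem_coneNodes.mpr h'⟩ hss
  · rintro ⟨l, hl⟩
    match l, hl with
    | [], h => exact hroot
    | (c :: s), h => exact hgl c (child_mem h) ⟨s, mem_coneNodes.mpr h⟩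

/-- One derivation step: replace `T` by a child cone which is still bad against `T'`,
if such a cone exists; otherwise keep `T`. -/
noncomputable def step (r : Q → Q → Prop) (T T' : FinLabeledTree Q) : FinLabeledTree Q :=
  if h : ∃ c, ∃ hc : [c] ∈ T.nodes, ¬ TreeLEm r (cone T c hc) T' then
    cone T h.choose h.choose_spec.choose
  else T

theorem step_not_le {T T' : FinLabeledTree Q} (h : ¬ TreeLEm r T T') :
    ¬ TreeLEm r (step r T T') T' := by
  unfold step
  split_ifs with hh
  · exact hh.choose_spec.choose_spec
  · exact h

theorem step_le (hr : Reflexive r) (T T' : FinLabeledTree Q) :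
    TreeLEm r (step r T T') T := by
  unfold step
  split_ifs with hh
  · exact cone_le hr _ _ _
  · exact treeLEm_refl hr T

theorem step_eq_or_card_lt (T T' : FinLabeledTree Q) :
    step r T T' = T ∨ (step r T T').nodes.card < T.nodes.card := by
  unfold step
  split_ifs with hh
  · exact Or.inr (cone_card_lt _ _ _)
  · exact Or.inl rfl

/-- If the step does not move `T`, then no child cone of `T` is bad against `T'`. -/
theorem forall_cone_of_step_eq {T T' : FinLabeledTree Q} (h : step r T T' = T) :
    ∀ c (hc : [c] ∈ T.nodes), TreeLEm r (cone T c hc) T' := by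
  by_contra hcon
  push_neg at hcon
  obtain ⟨c, hc, hbad⟩ := hcon
  have hex : ∃ c, ∃ hc : [c] ∈ T.nodes, ¬ TreeLEm r (cone T c hc) T' := ⟨c, hc, hbad⟩
  have hstep : step r T T' = cone T hex.choose hex.choose_spec.choose := by
    unfold step
    rw [dif_pos hex]
  have hlt : (step r T T').nodes.card < T.nodes.card := by
    rw [hstep]; exact cone_card_lt _ _ _
  rw [h] at hlt
  exact lt_irrefl _ hlt

/-- The derivative of a sequence of trees. -/
noncomputable def deriv (r : Q → Q → Prop) (X : ℕ → FinLabeledTree Q) :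
    ℕ → FinLabeledTree Q :=
  fun k => step r (X k) (X (k + 1))

theorem deriv_shift (X : ℕ → FinLabeledTree Q) :
    deriv r (seqShift X) = seqShift (deriv r X) := rfl

/-- The derivative preserves badness of consecutive pairs. -/
theorem deriv_mem_vecSet (hr : Reflexive r) (ht : Transitive r)
    {X : ℕ → FinLabeledTree Q} (hX : X ∈ vecSet (TreeLEm r)) :
    deriv r X ∈ vecSet (TreeLEm r) := by
  intro k hk
  exact step_not_le (hX k) (treeLEm_trans ht hk (step_le hr (X (k + 1)) (X (k + 2))))

/-- Iterated derivative. -/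
noncomputable def iterDeriv (r : Q → Q → Prop) (m : ℕ) (X : ℕ → FinLabeledTree Q) :
    ℕ → FinLabeledTree Q :=
  (deriv r)^[m] X

theorem iterDeriv_succ (m : ℕ) (X : ℕ → FinLabeledTree Q) :
    iterDeriv r (m + 1) X = deriv r (iterDeriv r m X) :=
  Function.iterate_succ_apply' (deriv r) m X

theorem iterDeriv_shift (m : ℕ) (X : ℕ → FinLabeledTree Q) :
    iterDeriv r m (seqShift X) = seqShift (iterDeriv r m X) := by
  induction m with
  | zero => rfl
  | succ n ih => rw [iterDeriv_succ, iterDeriv_succ, ih, deriv_shift]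

theorem iterDeriv_mem_vecSet (hr : Reflexive r) (ht : Transitive r)
    {X : ℕ → FinLabeledTree Q} (hX : X ∈ vecSet (TreeLEm r)) (m : ℕ) :
    iterDeriv r m X ∈ vecSet (TreeLEm r) := by
  induction m with
  | zero => exact hX
  | succ n ih => rw [iterDeriv_succ]; exact deriv_mem_vecSet hr ht ih

/-- Each coordinate of the iterated derivative stabilizes. -/
theorem exists_stab (X : ℕ → FinLabeledTree Q) (k : ℕ) :
    ∃ M, ∀ m ≥ M, iterDeriv r m X k = iterDeriv r M X k := by
  have hmono : ∀ m, iterDeriv r (m + 1) X k = iterDeriv r m X k ∨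
      (iterDeriv r (m + 1) X k).nodes.card < (iterDeriv r m X k).nodes.card := by
    intro m
    have e : iterDeriv r (m + 1) X k = step r (iterDeriv r m X k) (iterDeriv r m X (k + 1)) := by
      rw [iterDeriv_succ]; rfl
    rw [e]
    exact step_eq_or_card_lt _ _
  obtain ⟨M, hM⟩ := Nat.sInf_mem
    (Set.range_nonempty (fun m => (iterDeriv r m X k).nodes.card))
  simp only at hM
  refine ⟨M, ?_⟩
  have key : ∀ j, iterDeriv r (M + j) X k = iterDeriv r M X k := by
    intro j
    induction j with
    | zero => rfl
    | succ n ih =>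
      rcases hmono (M + n) with h | h
      · have e : M + (n + 1) = (M + n) + 1 := rfl
        rw [e, h, ih]
      · exfalso
        have h1 : (iterDeriv r (M + n) X k).nodes.card = (iterDeriv r M X k).nodes.card := by
          rw [ih]
        have h2 : sInf (Set.range fun m => (iterDeriv r m X k).nodes.card)
            ≤ (iterDeriv r (M + n + 1) X k).nodes.card := Nat.sInf_le ⟨M + n + 1, rfl⟩
        omega
  intro m hm
  have : m = M + (m - M) := by omega
  rw [this]
  exact key (m - M)

/-- Eventual value of an eventually-constant sequence. -/
noncomputable def evVal {α : Type*} (g : ℕ → α) (d : α) : α :=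
  if h : ∃ M, ∀ m ≥ M, g m = g M then g h.choose else d

theorem evVal_spec {α : Type*} {g : ℕ → α} {d : α} (h : ∃ M, ∀ m ≥ M, g m = g M) :
    ∃ M, ∀ m ≥ M, g m = evVal g d := by
  unfold evVal
  rw [dif_pos h]
  exact ⟨h.choose, h.choose_spec⟩

theorem evVal_eq_iff {α : Type*} {g : ℕ → α} {d t : α} (h : ∃ M, ∀ m ≥ M, g m = g M) :
    evVal g d = t ↔ ∃ M, ∀ m ≥ M, g m = t := by
  constructor
  · rintro rfl
    exact evVal_spec h
  · rintro ⟨M, hM⟩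
    obtain ⟨M', hM'⟩ := evVal_spec (d := d) h
    have h1 := hM (max M M') (le_max_left _ _)
    have h2 := hM' (max M M') (le_max_right _ _)
    rw [← h2, h1]

/-- The limit tree at coordinate `k`. -/
noncomputable def treeLim (r : Q → Q → Prop) (X : ℕ → FinLabeledTree Q) (k : ℕ) :
    FinLabeledTree Q :=
  evVal (fun m => iterDeriv r m X k) (X k)

theorem treeLim_spec (X : ℕ → FinLabeledTree Q) (k : ℕ) :
    ∃ M, ∀ m ≥ M, iterDeriv r m X k = treeLim r X k :=
  evVal_spec (exists_stab X k)

theorem treeLim_shift (X : ℕ → FinLabeledTree Q) (k : ℕ) :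
    treeLim r (seqShift X) k = treeLim r X (k + 1) := by
  unfold treeLim
  have h1 : (fun m => iterDeriv r m (seqShift X) k) = (fun m => iterDeriv r m X (k + 1)) := by
    funext m
    rw [iterDeriv_shift]
    rfl
  rw [h1]
  rfl

/-- The limit label sequence. -/
noncomputable def limLabel (r : Q → Q → Prop) (X : ℕ → FinLabeledTree Q) : ℕ → Q :=
  fun k => rootLabel (treeLim r X k)

theorem limLabel_shift (X : ℕ → FinLabeledTree Q) :
    limLabel r (seqShift X) = seqShift (limLabel r X) := by
  funext k
  show rootLabel (treeLim r (seqShift X) k) = rootLabel (treeLim r X (k + 1))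
  rw [treeLim_shift]

/-- Main combinatorial lemma: for a bad sequence of trees, the limit label sequence is a
bad sequence in `Q`. -/
theorem limLabel_mem_vecSet (hr : Reflexive r) (ht : Transitive r)
    {X : ℕ → FinLabeledTree Q} (hX : X ∈ vecSet (TreeLEm r)) :
    limLabel r X ∈ vecSet r := by
  intro k hk
  obtain ⟨M₁, h₁⟩ := treeLim_spec (r := r) X k
  obtain ⟨M₂, h₂⟩ := treeLim_spec (r := r) X (k + 1)
  set M := max M₁ M₂ with hM
  have e1 : iterDeriv r M X k = treeLim r X k := h₁ M (le_max_left _ _)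
  have e2 : iterDeriv r M X (k + 1) = treeLim r X (k + 1) := h₂ M (le_max_right _ _)
  have e3 : iterDeriv r (M + 1) X k = treeLim r X k :=
    h₁ (M + 1) (le_trans (le_max_left _ _) (Nat.le_succ _))
  have hstep : step r (iterDeriv r M X k) (iterDeriv r M X (k + 1)) = iterDeriv r M X k := by
    have h4 : iterDeriv r (M + 1) X k = step r (iterDeriv r M X k) (iterDeriv r M X (k + 1)) := by
      rw [iterDeriv_succ]
      rfl
    rw [← h4, e3, e1]
  have hallcone := forall_cone_of_step_eq hstep
  have hbadpair : ¬ TreeLEm r (iterDeriv r M X k) (iterDeriv r M X (k + 1)) :=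
    iterDeriv_mem_vecSet hr ht hX M k
  apply hbadpair
  apply treeLEm_of_forall_cone _ hallcone
  rw [e1, e2]
  exact hk

/-- Countability of the type of finite labeled trees. -/
theorem countable_finLabeledTree [Countable Q] : Countable (FinLabeledTree Q) := by
  classical
  have hinj : Function.Injective
      (fun T : FinLabeledTree Q => T.nodes.attach.image (fun s => (s.1, T.label s))) := by
    intro T₁ T₂ heq
    simp only at heq
    have hn : T₁.nodes = T₂.nodes := by
      have h1 := congrArg (Finset.image Prod.fst) heq
      rw [Finset.image_image, Finset.image_image] at h1
      have e1 : (Prod.fst ∘ fun s : {s // s ∈ T₁.nodes} => (s.1, T₁.label s)) = Subtype.val :=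
        rfl
      have e2 : (Prod.fst ∘ fun s : {s // s ∈ T₂.nodes} => (s.1, T₂.label s)) = Subtype.val :=
        rfl
      rw [e1, e2, Finset.attach_image_val, Finset.attach_image_val] at h1
      exact h1
    rcases T₁ with ⟨n₁, ne₁, pc₁, l₁⟩
    rcases T₂ with ⟨n₂, ne₂, pc₂, l₂⟩
    simp only at hn heq
    subst hn
    have hl : l₁ = l₂ := by
      funext x
      have hx : (x.1, l₁ x) ∈ n₁.attach.image
          (fun s : {s // s ∈ n₁} => (s.1, l₁ s)) :=
        Finset.mem_image.mpr ⟨x, Finset.mem_attach _ _, rfl⟩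
      rw [heq] at hx
      obtain ⟨y, _, hy⟩ := Finset.mem_image.mp hx
      have h1 : y.1 = x.1 := (Prod.mk.injEq _ _ _ _).mp hy |>.1
      have h2 : l₂ y = l₁ x := (Prod.mk.injEq _ _ _ _).mp hy |>.2
      have hyx : y = x := Subtype.ext h1
      subst hyx
      exact h2.symm
    subst hl
    rfl
  exact hinj.countable

end ThinTrees

open ThinTrees in
/-- If `Q` is a countable thin quasi-order, the finite `Q`-labeled trees under `≤ₘ` are thin. -/
theorem thin_finite_trees_lem {Q : Type*} [Countable Q]
    (r : Q → Q → Prop) (hr : Reflexive r) (ht : Transitive r)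
    (hQ : IsThin r) : IsThin (TreeLEm r) := by
  classical
  letI mQ : MeasurableSpace Q := ⊤
  letI mT : MeasurableSpace (FinLabeledTree Q) := ⊤
  haveI : MeasurableSingletonClass (FinLabeledTree Q) :=
    ⟨fun _ => MeasurableSpace.measurableSet_top⟩
  haveI : Countable (FinLabeledTree Q) := countable_finLabeledTree
  obtain ⟨c, hc, hcp⟩ := hQ
  -- measurability of the iterated derivative coordinates
  have hiter : ∀ (m k : ℕ), Measurable (fun X : ℕ → FinLabeledTree Q => iterDeriv r m X k) := by
    intro m
    induction m with
    | zero => intro k; exact measurable_pi_apply k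
    | succ n ih =>
      intro k
      have h1 : (fun X : ℕ → FinLabeledTree Q => iterDeriv r (n + 1) X k) =
          (fun p : FinLabeledTree Q × FinLabeledTree Q => step r p.1 p.2) ∘
            (fun X => (iterDeriv r n X k, iterDeriv r n X (k + 1))) := by
        funext X
        simp only [Function.comp_apply]
        rw [iterDeriv_succ]
        rfl
      rw [h1]
      exact (measurable_of_countable _).comp ((ih k).prodMk (ih (k + 1)))
  -- measurability of the limit tree coordinates
  have htlim : ∀ k : ℕ, Measurable (fun X : ℕ → FinLabeledTree Q => treeLim r X k) := by
    intro k
    apply measurable_to_countable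
    intro Y
    have hset : (fun X : ℕ → FinLabeledTree Q => treeLim r X k) ⁻¹' {treeLim r Y k} =
        ⋃ M : ℕ, ⋂ j : ℕ, {X : ℕ → FinLabeledTree Q |
          iterDeriv r (M + j) X k = treeLim r Y k} := by
      ext X
      simp only [Set.mem_preimage, Set.mem_singleton_iff, Set.mem_iUnion, Set.mem_iInter,
        Set.mem_setOf_eq]
      constructor
      · intro h
        obtain ⟨M, hM⟩ := treeLim_spec (r := r) X k
        exact ⟨M, fun j => by rw [hM (M + j) (Nat.le_add_right _ _), h]⟩
      · rintro ⟨M, hM⟩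
        exact (evVal_eq_iff (d := X k) (exists_stab X k)).mpr
          ⟨M, fun m hm => by
            have he : m = M + (m - M) := by omega
            rw [he]; exact hM (m - M)⟩
    rw [hset]
    refine MeasurableSet.iUnion fun M => MeasurableSet.iInter fun j => ?_
    have he : {X : ℕ → FinLabeledTree Q | iterDeriv r (M + j) X k = treeLim r Y k} =
        (fun X : ℕ → FinLabeledTree Q => iterDeriv r (M + j) X k) ⁻¹' {treeLim r Y k} := rfl
    rw [he]
    exact (hiter (M + j) k) MeasurableSpace.measurableSet_top
  -- the limit label map is measurable
  have hlam : Measurable (limLabel r (Q := Q)) := by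
    apply measurable_pi_lambda
    intro k
    exact measurable_from_top.comp (htlim k)
  -- assemble the colouring
  have hmem : ∀ X ∈ vecSet (TreeLEm r), limLabel r X ∈ vecSet r := by
    intro X hX
    exact limLabel_mem_vecSet hr ht hX
  refine ⟨fun X => c ⟨limLabel r X.1, hmem X.1 X.2⟩, ?_, ?_⟩
  · exact hc.comp (Measurable.subtype_mk (hlam.comp measurable_subtype_coe))
  · intro X hX hX'
    have hm1 : limLabel r X ∈ vecSet r := hmem X hX
    have hshift : limLabel r (seqShift X) = seqShift (limLabel r X) := limLabel_shift X
    have hm2 : seqShift (limLabel r X) ∈ vecSet r := hshift ▸ hmem _ hX'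
    have key := hcp (limLabel r X) hm1 hm2
    intro heq
    apply key
    calc c ⟨limLabel r X, hm1⟩
        = c ⟨limLabel r (seqShift X), hmem _ hX'⟩ := heq
      _ = c ⟨seqShift (limLabel r X), hm2⟩ := by
          congr 1
          exact Subtype.ext hshift
end

section
/- Let Q be a countable quasi-order and let ≤_H denote the Higman order on finite sequences over Q. Let X : ℕ → Q^{<ω} be such that for all k, ¬(X(k) ≤_H X(k+1)) and len(X(k)) ≤ len(X(k+1)). For each k let m_k be the largest integer m such that the initial segment of X(k) of length m satisfies (X(k) ↾ m) ≤_H X(k+1) (note m_k < len(X(k))), and let n_k be the least integer n with (X(k) ↾ m_k) ≤_H (X(k+1) ↾ n). If m_{k+1} ≥ n_k for every k, then the sequence Y defined by Y(k) = the entry of X(k) immediately following the prefix of length m_k (i.e., the entry at 0-based index m_k) satisfies ¬(Y(k) ≤_Q Y(k+1)) for every k. -/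
/-- The Higman order on finite sequences over `Q`: `t₁ ≤_H t₂` iff there is a strictly
increasing map of index sets along which the entries of `t₁` are dominated by those of `t₂`. -/
def HigmanLE {Q : Type*} (r : Q → Q → Prop) (t₁ t₂ : List Q) : Prop :=
  ∃ h : Fin t₁.length → Fin t₂.length, StrictMono h ∧ ∀ i, r (t₁.get i) (t₂.get (h i))

/-- Given a Higman-bad sequence `X` of lists of nondecreasing lengths, with `m k` the largest `m`
such that `(X k).take m ≤_H X (k+1)` and `n k` least with `(X k).take (m k) ≤_H (X (k+1)).take (n k)`,
if `n k ≤ m (k+1)` for all `k`, then the sequence of entries of `X k` at index `m k` is bad in `Q`. -/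
theorem bad_entry_sequence {Q : Type*} [Countable Q]
    (r : Q → Q → Prop) (hrefl : Reflexive r) (htrans : Transitive r)
    (X : ℕ → List Q)
    (hbad : ∀ k, ¬ HigmanLE r (X k) (X (k + 1)))
    (hlen : ∀ k, (X k).length ≤ (X (k + 1)).length)
    (m n : ℕ → ℕ)
    (hm : ∀ k, HigmanLE r ((X k).take (m k)) (X (k + 1)))
    (hm_max : ∀ k, ∀ m' : ℕ, HigmanLE r ((X k).take m') (X (k + 1)) → m' ≤ m k)
    (hn : ∀ k, HigmanLE r ((X k).take (m k)) ((X (k + 1)).take (n k)))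
    (hn_min : ∀ k, ∀ n' : ℕ, HigmanLE r ((X k).take (m k)) ((X (k + 1)).take n') → n k ≤ n')
    (hcross : ∀ k, n k ≤ m (k + 1)) :
    ∀ k, ∀ (hk : m k < (X k).length) (hk' : m (k + 1) < (X (k + 1)).length),
      ¬ r ((X k).get ⟨m k, hk⟩) ((X (k + 1)).get ⟨m (k + 1), hk'⟩) := by
  intro k hk hk' hr
  obtain ⟨h, hmono, hdom⟩ := hn k
  have len1 : ((X k).take (m k)).length = m k := by
    simp [Nat.min_eq_left hk.le]
  have len2 : ((X k).take (m k + 1)).length = m k + 1 := by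
    simp [Nat.min_eq_left hk]
  -- images of h are < n k ≤ m (k+1)
  have himg : ∀ i, ((h i) : ℕ) < m (k + 1) := fun i =>
    lt_of_lt_of_le (lt_of_lt_of_le (h i).2 (by simp [List.length_take])) (hcross k)
  have key : HigmanLE r ((X k).take (m k + 1)) (X (k + 1)) := by
    refine ⟨fun i => if hi : (i : ℕ) < m k then
        ⟨(h ⟨i, len1.symm ▸ hi⟩ : ℕ), lt_of_lt_of_le (himg _) hk'.le⟩
      else ⟨m (k + 1), hk'⟩, ?_, ?_⟩
    · intro i j hij
      by_cases hj : (j : ℕ) < m k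
      · have hi : (i : ℕ) < m k := lt_trans hij hj
        simp only [hi, hj, dif_pos]
        exact hmono (by exact hij)
      · have hi : (i : ℕ) < m k := by
          have := i.2; have := j.2
          omega
        simp only [hi, hj, dif_pos, dif_neg, not_false_iff]
        exact himg _
    · intro i
      by_cases hi : (i : ℕ) < m k
      · simp only [hi, dif_pos]
        have e1 : ((X k).take (m k + 1)).get i = ((X k).take (m k)).get ⟨i, len1.symm ▸ hi⟩ := by
          simp [List.getElem_take']
        have e2 : ((X (k + 1)).take (n k)).get (h ⟨i, len1.symm ▸ hi⟩)
            = (X (k + 1)).get ⟨(h ⟨i, len1.symm ▸ hi⟩ : ℕ), lt_of_lt_of_le (himg _) hk'.le⟩ := by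
          simp [List.getElem_take']
        rw [e1, ← e2]
        exact hdom _
      · have hi' : (i : ℕ) = m k := by have := i.2; omega
        simp only [hi, dif_neg, not_false_iff]
        have e1 : ((X k).take (m k + 1)).get i = (X k).get ⟨m k, hk⟩ := by
          simp only [List.get_eq_getElem, List.getElem_take, hi']
        rw [e1]
        exact hr
  have := hm_max k (m k + 1) key
  omega
end
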